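/- Suppose Φ is of type B_n and α_n ∉ I (equivalently p_k = n). Then K_r = 𝒴_r for every r ≥ 0. -/
import Mathlib


open Finset

inductive RSType where
  | B
  | C
  | D
deriving DecidableEq

noncomputable def eps (n : ℕ) (i : Fin n) : Fin n → ℝ := fun j => if j = i then 1 else 0

noncomputable def simpleRoot (n : ℕ) (t : RSType) (i : Fin n) : Fin n → ℝ :=
  if (i : ℕ) + 1 < n then
    eps n i - (fun j : Fin n => if (j : ℕ) = (i : ℕ) + 1 then 1 else 0)
  else
    match t with
    | RSType.B => eps n i
    | RSType.C => (2 : ℝ) • eps n i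
    | RSType.D => (fun j : Fin n => if (j : ℕ) + 1 = (i : ℕ) then 1 else 0) + eps n i

noncomputable def inn (n : ℕ) (x y : Fin n → ℝ) : ℝ := ∑ i, x i * y i

noncomputable def pairing (n : ℕ) (x y : Fin n → ℝ) : ℝ := 2 * inn n x y / inn n y y

/-- Membership in `Λ^{𝔭_I}` where `I = Π \ {α_{p 1}, …, α_{p k}}`:
`⟨μ, α^∨⟩ ∈ ℕ` for all simple roots `α ∈ I`. -/
def inLam (n : ℕ) (t : RSType) (p : ℕ → ℕ) (k : ℕ) (μ : Fin n → ℝ) : Prop :=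
  ∀ i : Fin n, (∀ j, 1 ≤ j → j ≤ k → (i : ℕ) + 1 ≠ p j) →
    ∃ m : ℕ, pairing n μ (simpleRoot n t i) = (m : ℝ)

def inLamZ (n : ℕ) (t : RSType) (p : ℕ → ℕ) (k : ℕ) (a : Fin n → ℤ) : Prop :=
  inLam n t p k (fun i => (a i : ℝ))

/-- `𝒳_r = {a ∈ ℤ^n : Σ |a_i| ≤ r}` (empty if `r < 0`). -/
def Xr (n : ℕ) (r : ℤ) : Set (Fin n → ℤ) := {a | ∑ i, |a i| ≤ r}

/-- `𝒳'_r = {a ∈ 𝒳_r : Σ a_i ≡ r (mod 2)}`. -/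
def Xr' (n : ℕ) (r : ℤ) : Set (Fin n → ℤ) :=
  {a | a ∈ Xr n r ∧ (2 : ℤ) ∣ ((∑ i, a i) - r)}

/-- `𝒳'_{r,j}`: for `j < n - pk` those `a ∈ 𝒳'_r` with `a_{n-j} ≠ 0`; and
`𝒳'_{r, n - pk} = 𝒳'_r`. -/
def Xrj (n : ℕ) (pk : ℕ) (r : ℤ) (j : ℕ) : Set (Fin n → ℤ) :=
  if j = n - pk then Xr' n r
  else {a | a ∈ Xr' n r ∧ ∃ i : Fin n, (i : ℕ) + j + 1 = n ∧ a i ≠ 0}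

def Yr (n : ℕ) (t : RSType) (p : ℕ → ℕ) (k : ℕ) (r : ℤ) : Set (Fin n → ℤ) :=
  {a | a ∈ Xr n r ∧ inLamZ n t p k a}

def Yr' (n : ℕ) (t : RSType) (p : ℕ → ℕ) (k : ℕ) (r : ℤ) : Set (Fin n → ℤ) :=
  {a | a ∈ Xr' n r ∧ inLamZ n t p k a}

def Yrj (n : ℕ) (t : RSType) (p : ℕ → ℕ) (k : ℕ) (r : ℤ) (j : ℕ) : Set (Fin n → ℤ) :=
  {a | a ∈ Xrj n (p k) r j ∧ inLamZ n t p k a}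

def epsZ (n : ℕ) (i : Fin n) : Fin n → ℤ := fun j => if j = i then 1 else 0

/-- The set `S_μ`: in type `B_n`, if `α_n ∉ I` (i.e. `p k = n`) or `μ_n ≠ 0`, it is
`{μ + hε_i ∈ Λ^{𝔭_I} : 1 ≤ i ≤ n, h ∈ {0, 1, -1}}`; otherwise (and in types `C_n`,
`D_n`) it is `{μ + hε_i ∈ Λ^{𝔭_I} : 1 ≤ i ≤ n, h ∈ {1, -1}}`. -/
def SS (n : ℕ) (t : RSType) (p : ℕ → ℕ) (k : ℕ) (μ : Fin n → ℤ) : Set (Fin n → ℤ) :=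
  {ν | (∃ (i : Fin n) (h : ℤ),
          h ∈ (if t = RSType.B ∧ (p k = n ∨ ∃ i' : Fin n, (i' : ℕ) = n - 1 ∧ μ i' ≠ 0)
               then ({0, 1, -1} : Set ℤ) else ({1, -1} : Set ℤ)) ∧
          ν = μ + h • epsZ n i) ∧
        inLamZ n t p k ν}

/-- `K_0 = {0}` and `K_r = ⋃_{μ ∈ K_{r-1}} S_μ`. -/
def KK (n : ℕ) (t : RSType) (p : ℕ → ℕ) (k : ℕ) : ℕ → Set (Fin n → ℤ)
  | 0 => {0}
  | r + 1 => ⋃ μ ∈ KK n t p k r, SS n t p k μ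

/-- The concrete monotonicity condition equivalent to `inLamZ` in type B with `p k = n`. -/
def Good (n k : ℕ) (p : ℕ → ℕ) (a : Fin n → ℤ) : Prop :=
  ∀ i : Fin n, ∀ hi : (i : ℕ) + 1 < n,
    (∀ j, 1 ≤ j → j ≤ k → (i : ℕ) + 1 ≠ p j) → a ⟨(i : ℕ) + 1, hi⟩ ≤ a i

lemma pairing_eq_sub (n : ℕ) (μ : Fin n → ℝ) (i : Fin n) (hi : (i : ℕ) + 1 < n) :
    pairing n μ (simpleRoot n RSType.B i) = μ i - μ ⟨(i : ℕ) + 1, hi⟩ := by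
  set i' : Fin n := ⟨(i : ℕ) + 1, hi⟩ with hi'
  have hne : i' ≠ i := by
    simp only [hi', Ne, Fin.ext_iff]
    omega
  have hroot : simpleRoot n RSType.B i
      = fun j => (if j = i then (1 : ℝ) else 0) - (if j = i' then 1 else 0) := by
    rw [simpleRoot, if_pos hi]
    funext j
    have hiff : ((j : ℕ) = (i : ℕ) + 1) ↔ j = i' := by
      simp [hi', Fin.ext_iff]
    simp [eps, hiff]
  have h1 : inn n μ (simpleRoot n RSType.B i) = μ i - μ i' := by
    simp [inn, hroot, mul_sub, Finset.sum_sub_distrib, mul_ite, mul_one, mul_zero]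
  have h2 : inn n (simpleRoot n RSType.B i) (simpleRoot n RSType.B i) = 2 := by
    rw [hroot]
    simp only [inn]
    have key : ∀ j : Fin n,
        ((if j = i then (1:ℝ) else 0) - if j = i' then 1 else 0)
        * ((if j = i then (1:ℝ) else 0) - if j = i' then 1 else 0)
        = (if j = i then (1:ℝ) else 0) + (if j = i' then 1 else 0) := by
      intro j
      by_cases hj1 : j = i
      · have hj2 : j ≠ i' := by rintro rfl; exact hne hj1
        simp [hj1, hj2, Ne.symm hne]
      · by_cases hj2 : j = i' <;> simp [hj1, hj2, hne]
    rw [Finset.sum_congr rfl (fun j _ => key j)]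
    rw [Finset.sum_add_distrib]
    simp
    norm_num
  rw [pairing, h1, h2]
  ring

lemma inLamZ_iff_good (n k : ℕ) (p : ℕ → ℕ) (hk1 : 1 ≤ k) (hpk : p k = n)
    (a : Fin n → ℤ) : inLamZ n RSType.B p k a ↔ Good n k p a := by
  constructor
  · intro hL i hi hfree
    obtain ⟨m, hm⟩ := hL i hfree
    rw [pairing_eq_sub n _ i hi] at hm
    have h0 : (0:ℝ) ≤ (a i : ℝ) - (a ⟨(i:ℕ)+1, hi⟩ : ℝ) := by
      rw [hm]; positivity
    have := sub_nonneg.mp h0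
    exact_mod_cast this
  · intro hg i hfree
    by_cases hi : (i : ℕ) + 1 < n
    · refine ⟨(a i - a ⟨(i:ℕ)+1, hi⟩).toNat, ?_⟩
      rw [pairing_eq_sub n _ i hi]
      have hle := hg i hi hfree
      have : ((a i - a ⟨(i:ℕ)+1, hi⟩).toNat : ℤ) = a i - a ⟨(i:ℕ)+1, hi⟩ :=
        Int.toNat_of_nonneg (sub_nonneg.mpr hle)
      exact_mod_cast this.symm
    · exfalso
      have hin : (i : ℕ) + 1 = n := by have := i.isLt; omega
      exact hfree k hk1 le_rfl (hin.trans hpk.symm)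

lemma step_lemma (n k : ℕ) (p : ℕ → ℕ) (a : Fin n → ℤ)
    (hg : Good n k p a) (ha : a ≠ 0) :
    ∃ (j : Fin n) (h : ℤ), (h = 1 ∨ h = -1) ∧
      Good n k p (fun i => a i - h * (if i = j then 1 else 0)) ∧
      (∑ i, |a i - h * (if i = j then 1 else 0)|) + 1 = ∑ i, |a i| := by
  have hsum_aux : ∀ (j : Fin n) (h : ℤ),
      |a j - h * (if j = j then 1 else 0)| + 1 = |a j| →
      (∑ i, |a i - h * (if i = j then 1 else 0)|) + 1 = ∑ i, |a i| := by
    intro j h hj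
    have e1 : (∑ i, |a i - h * (if i = j then 1 else 0)|)
        = |a j - h * (if j = j then 1 else 0)|
          + ∑ i ∈ Finset.univ.erase j, |a i - h * (if i = j then 1 else 0)| :=
      (Finset.add_sum_erase Finset.univ
        (fun i => |a i - h * (if i = j then 1 else 0)|) (Finset.mem_univ j)).symm
    have e2 : (∑ i, |a i|) = |a j| + ∑ i ∈ Finset.univ.erase j, |a i| :=
      (Finset.add_sum_erase Finset.univ (fun i => |a i|) (Finset.mem_univ j)).symm
    have e3 : ∑ i ∈ Finset.univ.erase j, |a i - h * (if i = j then 1 else 0)|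
        = ∑ i ∈ Finset.univ.erase j, |a i| := by
      refine Finset.sum_congr rfl (fun i hi => ?_)
      have : i ≠ j := Finset.ne_of_mem_erase hi
      simp [this]
    rw [e1, e2, e3]
    omega
  by_cases hpos : ∃ i, 0 < a i
  · obtain ⟨i0, hi0⟩ := hpos
    obtain ⟨j, hja, hafter⟩ : ∃ j : Fin n, 0 < a j ∧ ∀ i : Fin n, j < i → a i ≤ 0 := by
      have hTne : (Finset.univ.filter (fun i => 0 < a i)).Nonempty := ⟨i0, by simp [hi0]⟩
      refine ⟨(Finset.univ.filter (fun i => 0 < a i)).max' hTne, ?_, ?_⟩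
      · have := Finset.max'_mem _ hTne
        simpa using this
      · intro i hji
        by_contra hcon
        push_neg at hcon
        have hmem : i ∈ Finset.univ.filter (fun i => 0 < a i) := by simp [hcon]
        exact absurd (Finset.le_max' _ i hmem) (not_le.mpr hji)
    refine ⟨j, 1, Or.inl rfl, ?_, ?_⟩
    · intro i hi hfree
      show a ⟨(i:ℕ)+1, hi⟩ - 1 * (if (⟨(i:ℕ)+1, hi⟩ : Fin n) = j then 1 else 0)
          ≤ a i - 1 * (if i = j then 1 else 0)
      by_cases hij : i = j
      · subst hij
        have hne : (⟨(i:ℕ)+1, hi⟩ : Fin n) ≠ i := by simp [Fin.ext_iff]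
        have hlt : i < (⟨(i:ℕ)+1, hi⟩ : Fin n) := by simp [Fin.lt_def]
        have h0 := hafter _ hlt
        rw [if_neg hne, if_pos rfl]
        omega
      · have hle := hg i hi hfree
        by_cases hij' : (⟨(i:ℕ)+1, hi⟩ : Fin n) = j
        · rw [if_pos hij', if_neg hij]
          omega
        · rw [if_neg hij, if_neg hij']
          omega
    · apply hsum_aux
      have h1 : 0 ≤ a j - 1 := by omega
      rw [if_pos rfl, mul_one, abs_of_nonneg h1, abs_of_pos hja]
      ring
  · push_neg at hpos
    obtain ⟨i0, hi0⟩ : ∃ i, a i < 0 := by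
      obtain ⟨i0, hi0⟩ := Function.ne_iff.mp ha
      exact ⟨i0, lt_of_le_of_ne (hpos i0) hi0⟩
    obtain ⟨j, hja, hbefore⟩ : ∃ j : Fin n, a j < 0 ∧ ∀ i : Fin n, i < j → a i = 0 := by
      have hTne : (Finset.univ.filter (fun i => a i < 0)).Nonempty := ⟨i0, by simp [hi0]⟩
      refine ⟨(Finset.univ.filter (fun i => a i < 0)).min' hTne, ?_, ?_⟩
      · have := Finset.min'_mem _ hTne
        simpa using this
      · intro i hij
        by_contra hcon
        have hlt : a i < 0 := lt_of_le_of_ne (hpos i) hcon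
        have hmem : i ∈ Finset.univ.filter (fun i => a i < 0) := by simp [hlt]
        exact absurd (Finset.min'_le _ i hmem) (not_le.mpr hij)
    refine ⟨j, -1, Or.inr rfl, ?_, ?_⟩
    · intro i hi hfree
      show a ⟨(i:ℕ)+1, hi⟩ - (-1) * (if (⟨(i:ℕ)+1, hi⟩ : Fin n) = j then 1 else 0)
          ≤ a i - (-1) * (if i = j then 1 else 0)
      by_cases hij : i = j
      · subst hij
        have hne : (⟨(i:ℕ)+1, hi⟩ : Fin n) ≠ i := by simp [Fin.ext_iff]
        have hle := hg i hi hfree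
        rw [if_neg hne, if_pos rfl]
        omega
      · by_cases hij' : (⟨(i:ℕ)+1, hi⟩ : Fin n) = j
        · have hlt : i < j := by
            rw [← hij']
            simp [Fin.lt_def]
          have h0 := hbefore i hlt
          rw [hij', if_pos rfl, if_neg hij]
          omega
        · have hle := hg i hi hfree
          rw [if_neg hij, if_neg hij']
          omega
    · apply hsum_aux
      have h1 : a j + 1 ≤ 0 := by omega
      rw [if_pos rfl, mul_one]
      have h2 : a j - -1 = a j + 1 := by ring
      rw [h2, abs_of_nonpos h1, abs_of_neg hja]
      ring

/-- Lemma 6.4(1): in type `B_n` with `α_n ∉ I` (i.e. `p_k = n`), `K_r = 𝒴_r`. -/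
theorem stmt2 (n k : ℕ) (hn : 2 ≤ n)
    (p : ℕ → ℕ) (hp0 : p 0 = 0)
    (hmono : ∀ j, j < k → p j < p (j + 1))
    (hpk : p k = n) (hpk1 : p (k + 1) = n)
    (r : ℕ) :
    KK n RSType.B p k r = Yr n RSType.B p k (r : ℤ) := by
  have hk1 : 1 ≤ k := by
    rcases Nat.eq_zero_or_pos k with hk | hk
    · exfalso; rw [hk] at hpk; omega
    · exact hk
  induction r with
  | zero =>
    ext a
    simp only [KK, Yr, Xr, Set.mem_singleton_iff, Set.mem_setOf_eq, Nat.cast_zero]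
    constructor
    · rintro rfl
      refine ⟨by simp, (inLamZ_iff_good n k p hk1 hpk 0).mpr ?_⟩
      intro i hi _
      simp
    · rintro ⟨hsum, -⟩
      funext i
      have h1 : |a i| ≤ ∑ l, |a l| :=
        Finset.single_le_sum (fun l _ => abs_nonneg (a l)) (Finset.mem_univ i)
      have h2 : |a i| ≤ 0 := le_trans h1 hsum
      have h3 : a i = 0 := abs_eq_zero.mp (le_antisymm h2 (abs_nonneg _))
      simpa using h3
  | succ r ih =>
    have hcast : ((r + 1 : ℕ) : ℤ) = (r : ℤ) + 1 := by push_cast; ring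
    ext a
    simp only [KK, Set.mem_iUnion, Yr, Xr, Set.mem_setOf_eq, SS]
    constructor
    · rintro ⟨μ, hμ, ⟨i, h, hh, rfl⟩, hlam⟩
      rw [ih] at hμ
      obtain ⟨hμ1, hμ2⟩ := hμ
      simp only [Yr, Xr, Set.mem_setOf_eq] at hμ1
      refine ⟨?_, hlam⟩
      have hh1 : |h| ≤ 1 := by
        split at hh
        · simp only [Set.mem_insert_iff, Set.mem_singleton_iff] at hh
          rcases hh with rfl | rfl | rfl <;> decide
        · simp only [Set.mem_insert_iff, Set.mem_singleton_iff] at hh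
          rcases hh with rfl | rfl <;> decide
      have hb : ∀ l : Fin n, |(μ + h • epsZ n i) l| ≤ |μ l| + |h| * (if l = i then 1 else 0) := by
        intro l
        simp only [Pi.add_apply, Pi.smul_apply, epsZ, smul_eq_mul]
        calc |μ l + h * (if l = i then 1 else 0)|
            ≤ |μ l| + |h * (if l = i then 1 else 0)| := abs_add_le _ _
          _ = |μ l| + |h| * (if l = i then 1 else 0) := by
              by_cases hl : l = i <;> simp [hl, abs_mul]
      have hsum : ∑ l, |(μ + h • epsZ n i) l| ≤ (∑ l, |μ l|) + |h| := by
        calc ∑ l, |(μ + h • epsZ n i) l|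
            ≤ ∑ l, (|μ l| + |h| * (if l = i then 1 else 0)) :=
              Finset.sum_le_sum (fun l _ => hb l)
          _ = (∑ l, |μ l|) + |h| := by rw [Finset.sum_add_distrib]; simp
      rw [hcast]
      have hXr : ∑ l, |μ l| ≤ (r : ℤ) := hμ1
      linarith
    · rintro ⟨hsum, hlam⟩
      rw [hcast] at hsum
      by_cases hr : ∑ l, |a l| ≤ (r : ℤ)
      · refine ⟨a, ?_, ⟨⟨0, Nat.lt_of_lt_of_le (by omega) hn⟩, 0, ?_, ?_⟩, hlam⟩
        · rw [ih]; exact ⟨hr, hlam⟩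
        · simp [hpk]
        · funext l; simp [epsZ]
      · have hane : a ≠ 0 := by
          rintro rfl
          apply hr
          simp
        obtain ⟨j, h, hh, hgood, hsum'⟩ :=
          step_lemma n k p a ((inLamZ_iff_good n k p hk1 hpk a).mp hlam) hane
        refine ⟨fun l => a l - h * (if l = j then 1 else 0), ?_, ⟨j, h, ?_, ?_⟩, hlam⟩
        · rw [ih]
          refine ⟨?_, (inLamZ_iff_good n k p hk1 hpk _).mpr hgood⟩
          show ∑ l, |a l - h * (if l = j then 1 else 0)| ≤ (r : ℤ)
          omega
        · rcases hh with rfl | rfl <;> simp [hpk]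
        · funext l
          simp only [Pi.add_apply, Pi.smul_apply, smul_eq_mul, epsZ]
          ring
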